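/- (Class DIII in 1D) Let J = [[0, −I_n],[I_n, 0]] and Γ = iJ = [[0, −iI_n],[iI_n, 0]] ∈ M_{2n}(ℂ), and define Q^♯ = J⁻¹QᵀJ. Suppose X ∈ M_{2n}(ℂ) is Hermitian with real entries and X^♯ = X, and H ∈ M_{2n}(ℂ) is Hermitian with purely imaginary entries and H^♯ = H. Then XΓ = ΓX and HΓ = −ΓH, the matrix XΓ + H is Hermitian with purely imaginary entries (so that i(XΓ + H) is real and skew-symmetric), and with ω = (1 − i)/2 and Q = ωI + ω̄Γ one has Q (X + iH) Γ Q* = XΓ + H. -/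
import Mathlib


open Matrix

/-- The matrix `J = [[0, −I],[I, 0]]`. -/
noncomputable def Jmat (n : ℕ) : Matrix (Fin n ⊕ Fin n) (Fin n ⊕ Fin n) ℂ :=
  Matrix.fromBlocks 0 (-1) 1 0

/-- The dual `Q^♯ = J⁻¹ Qᵀ J`. -/
noncomputable def dualMat {n : ℕ} (Q : Matrix (Fin n ⊕ Fin n) (Fin n ⊕ Fin n) ℂ) :
    Matrix (Fin n ⊕ Fin n) (Fin n ⊕ Fin n) ℂ :=
  (Jmat n)⁻¹ * Qᵀ * Jmat n

/-- The grading operator `Γ = iJ = [[0, −iI],[iI, 0]]`. -/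
noncomputable def Gam (n : ℕ) : Matrix (Fin n ⊕ Fin n) (Fin n ⊕ Fin n) ℂ :=
  Complex.I • Jmat n

/-- The unitary `Q = ωI + ω̄Γ` with `ω = (1 − i)/2`. -/
noncomputable def Qmat (n : ℕ) : Matrix (Fin n ⊕ Fin n) (Fin n ⊕ Fin n) ℂ :=
  ((1 - Complex.I) / 2) • 1 + (starRingEnd ℂ ((1 - Complex.I) / 2)) • Gam n

lemma Jsq (n : ℕ) : Jmat n * Jmat n = -1 := by
  simp [Jmat, Matrix.fromBlocks_multiply, ← Matrix.fromBlocks_one, Matrix.fromBlocks_neg]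

lemma Jtrans (n : ℕ) : (Jmat n)ᵀ = -(Jmat n) := by
  simp [Jmat, Matrix.fromBlocks_transpose, Matrix.fromBlocks_neg]

lemma Jreal (n : ℕ) : (Jmat n).map (starRingEnd ℂ) = Jmat n := by
  have h1 : ((-1 : Matrix (Fin n) (Fin n) ℂ)).map (starRingEnd ℂ) = -1 := by
    ext i j; simp [Matrix.one_apply]
  have h2 : ((1 : Matrix (Fin n) (Fin n) ℂ)).map (starRingEnd ℂ) = 1 := by
    ext i j; simp [Matrix.one_apply]
  simp [Jmat, Matrix.fromBlocks_map, h1, h2]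

lemma Jinv (n : ℕ) : (Jmat n)⁻¹ = -(Jmat n) := by
  apply Matrix.inv_eq_right_inv
  rw [mul_neg, Jsq, neg_neg]

lemma Gam_sq (n : ℕ) : Gam n * Gam n = 1 := by
  rw [Gam, smul_mul_assoc, mul_smul_comm, smul_smul, Complex.I_mul_I, Jsq, neg_one_smul, neg_neg]

lemma GamH (n : ℕ) : (Gam n)ᴴ = Gam n := by
  have : (Jmat n)ᴴ = -(Jmat n) := by
    ext i j
    have := congrFun (congrFun (Jreal n) j) i
    have ht := congrFun (congrFun (Jtrans n) i) j
    simp only [Matrix.conjTranspose_apply, Matrix.neg_apply] at *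
    rw [← ht]
    simpa [Matrix.transpose_apply] using this
  rw [Gam, Matrix.conjTranspose_smul, this, Complex.star_def, Complex.conj_I, neg_smul, smul_neg,
    neg_neg]

theorem stmt14 {n : ℕ} (X H : Matrix (Fin n ⊕ Fin n) (Fin n ⊕ Fin n) ℂ)
    (hX : X.IsHermitian) (hXreal : X.map (starRingEnd ℂ) = X) (hXdual : dualMat X = X)
    (hH : H.IsHermitian) (hHimag : H.map (starRingEnd ℂ) = -H) (hHdual : dualMat H = H) :
    X * Gam n = Gam n * X ∧
      H * Gam n = -(Gam n * H) ∧
      (X * Gam n + H).IsHermitian ∧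
      (X * Gam n + H).map (starRingEnd ℂ) = -(X * Gam n + H) ∧
      (Complex.I • (X * Gam n + H)).map (starRingEnd ℂ) = Complex.I • (X * Gam n + H) ∧
      (Complex.I • (X * Gam n + H))ᵀ = -(Complex.I • (X * Gam n + H)) ∧
      Qmat n * ((X + Complex.I • H) * Gam n) * star (Qmat n) = X * Gam n + H := by
  -- transpose facts
  have hXt : Xᵀ = X := by
    ext i j
    have h1 : (starRingEnd ℂ) (X j i) = X i j := congrFun (congrFun hX i) j
    have h2 : (starRingEnd ℂ) (X j i) = X j i := congrFun (congrFun hXreal j) i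
    simp only [Matrix.transpose_apply]
    rw [← h2, h1]
  have hHt : Hᵀ = -H := by
    ext i j
    have h1 : (starRingEnd ℂ) (H j i) = H i j := congrFun (congrFun hH i) j
    have h2 : (starRingEnd ℂ) (H j i) = -H j i := congrFun (congrFun hHimag j) i
    simp only [Matrix.transpose_apply, Matrix.neg_apply]
    rw [← h1, h2, neg_neg]
  -- commutation with J
  have hXJ : X * Jmat n = Jmat n * X := by
    have h := hXdual
    rw [dualMat, Jinv, hXt, neg_mul, neg_mul] at h
    -- h : -(J * X * J) = X
    have h2 : -(Jmat n * X * Jmat n) * Jmat n = X * Jmat n := by rw [h]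
    rw [neg_mul, mul_assoc, Jsq, mul_neg_one, neg_neg] at h2
    exact h2.symm
  have hHJ : H * Jmat n = -(Jmat n * H) := by
    have h := hHdual
    rw [dualMat, Jinv, hHt] at h
    simp only [neg_mul, mul_neg, neg_neg] at h
    -- h : J * H * J = H
    have h2 : (Jmat n * H * Jmat n) * Jmat n = H * Jmat n := by rw [h]
    rw [mul_assoc, Jsq, mul_neg_one] at h2
    exact h2.symm
  have part1 : X * Gam n = Gam n * X := by
    rw [Gam, mul_smul_comm, smul_mul_assoc, hXJ]
  have part2 : H * Gam n = -(Gam n * H) := by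
    rw [Gam, mul_smul_comm, smul_mul_assoc, hHJ, smul_neg]
  have part3 : (X * Gam n + H).IsHermitian := by
    rw [Matrix.IsHermitian, Matrix.conjTranspose_add, Matrix.conjTranspose_mul, GamH, hX, hH,
      ← part1]
  have Gconj : (Gam n).map (starRingEnd ℂ) = -(Gam n) := by
    ext i j
    have := congrFun (congrFun (Jreal n) i) j
    simp only [Gam, Matrix.map_apply, Matrix.smul_apply, Matrix.neg_apply, smul_eq_mul] at *
    rw [_root_.map_mul, Complex.conj_I, this]; ring
  have part4 : (X * Gam n + H).map (starRingEnd ℂ) = -(X * Gam n + H) := by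
    rw [Matrix.map_add _ (map_add (starRingEnd ℂ)), Matrix.map_mul, hXreal, Gconj, hHimag,
      mul_neg, neg_add]
  have part5 : (Complex.I • (X * Gam n + H)).map (starRingEnd ℂ)
      = Complex.I • (X * Gam n + H) := by
    ext i j
    have h4 := congrFun (congrFun part4 i) j
    simp only [Matrix.map_apply, Matrix.smul_apply, Matrix.neg_apply, smul_eq_mul] at *
    rw [_root_.map_mul, Complex.conj_I, h4]; ring
  have part6 : (Complex.I • (X * Gam n + H))ᵀ = -(Complex.I • (X * Gam n + H)) := by
    ext i j
    have h4 := congrFun (congrFun part4 j) i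
    have h3 : (starRingEnd ℂ) ((X * Gam n + H) j i) = (X * Gam n + H) i j :=
      congrFun (congrFun part3 i) j
    simp only [Matrix.transpose_apply, Matrix.smul_apply, Matrix.neg_apply, smul_eq_mul,
      Matrix.map_apply] at *
    rw [← h3, h4]; ring
  refine ⟨part1, part2, part3, part4, part5, part6, ?_⟩
  -- the conjugation identity
  have hGX : Gam n * X = X * Gam n := part1.symm
  have hGH : Gam n * H = -(H * Gam n) := by rw [part2, neg_neg]
  have hQstar : star (Qmat n) =
      (starRingEnd ℂ) ((1 - Complex.I) / 2) • (1 : Matrix (Fin n ⊕ Fin n) (Fin n ⊕ Fin n) ℂ)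
        + ((1 - Complex.I) / 2) • Gam n := by
    simp only [Qmat, star_add, star_smul, star_one, starRingEnd_apply, star_star,
      Matrix.star_eq_conjTranspose, GamH]
  have hGXc : ∀ C, Gam n * (X * C) = X * (Gam n * C) := fun C => by
    rw [← mul_assoc, hGX, mul_assoc]
  have hGHc : ∀ C, Gam n * (H * C) = -(H * (Gam n * C)) := fun C => by
    rw [← mul_assoc, hGH, neg_mul, mul_assoc]
  have GGc : ∀ C, Gam n * (Gam n * C) = C := fun C => by
    rw [← mul_assoc, Gam_sq, one_mul]
  have hconj : (starRingEnd ℂ) ((1 - Complex.I) / 2) = (1 + Complex.I) / 2 := by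
    simp [map_div₀, sub_neg_eq_add, map_ofNat]
  rw [hQstar, Qmat, hconj]
  simp only [add_mul, mul_add, smul_mul_assoc, mul_smul_comm, mul_assoc, one_mul, mul_one,
    hGX, hGH, Gam_sq, hGXc, hGHc, GGc, smul_neg, neg_mul, mul_neg, smul_smul, smul_add, neg_smul]
  match_scalars <;> (ring_nf; try simp [Complex.I_sq]; try ring_nf)
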